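/- arXiv:1204.1149 — 2 statements merged into one kernel-verified Lean document; each statement's English description precedes it below -/
import Mathlib

section
/- Fix integers 2 ≤ r ≤ n, let B_n = {(a,s): 1 ≤ a,s ≤ n, a+(r−1)s ≤ n} and define B_{a,s} as above. Then the number of quadruples (a,s,b,t) ∈ B_n × B_n with |B_{a,s} ∩ B_{b,t}| ≥ 2 is at most 9n²r³/4. -/
/-- `B_{a,s}` : the `r`-term progression `{a, a+s, …, a+(r−1)s}`, extended by
`a−s` when `a > s`. -/
def progSet (r a s : ℕ) : Finset ℕ :=
  ((Finset.range r).image fun j => a + j * s) ∪ (if s < a then {a - s} else ∅)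

/-- `B_n` : pairs `(a,s)` with `1 ≤ a,s ≤ n` and `a+(r−1)s ≤ n`. -/
def Bn (n r : ℕ) : Finset (ℕ × ℕ) :=
  (Finset.Icc 1 n ×ˢ Finset.Icc 1 n).filter fun q : ℕ × ℕ => q.1 + (r - 1) * q.2 ≤ n

/-!
Two common points `u < v` of `B_{a,s}` and `B_{b,t}` satisfy `v - u = k₁ s = k₂ t` with
`1 ≤ k₁, k₂ ≤ r`. Hence, for fixed `(a, s)`, a partner `(b, t)` is determined by `u ∈ B_{a,s}`,
`k₁`, `k₂` and the position `j ≤ r` of `u` in `B_{b,t}`, leaving at most `r²(r+1)²` partners.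
On the other hand each `(a, s) ∈ B_n` owns `r - 1` points `(a, c)` of the triangle `a + c ≤ n`,
which fills at most half of `[1, n]²`, so `2 (r - 1) |B_n| ≤ n²`. The two bounds combine since
`2 (r + 1)² ≤ 9 r (r - 1)` for `r ≥ 2`.
-/

open Finset

lemma exists_add_eq_of_mem_progSet {r a s x : ℕ} (hx : x ∈ progSet r a s) :
    ∃ j ≤ r, x + s = a + j * s := by
  simp only [progSet, mem_union, mem_image, mem_range] at hx
  rcases hx with ⟨j, hj, rfl⟩ | hx
  · exact ⟨j + 1, hj, by ring⟩
  · split_ifs at hx with hsa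
    · exact ⟨0, Nat.zero_le r, by rw [mem_singleton.mp hx]; omega⟩
    · exact absurd hx (notMem_empty x)

lemma exists_eq_add_mul_of_mem_progSet {r a s x y : ℕ} (hx : x ∈ progSet r a s)
    (hy : y ∈ progSet r a s) (hxy : x < y) : ∃ k ∈ Icc 1 r, y = x + k * s := by
  obtain ⟨i, hi, hxi⟩ := exists_add_eq_of_mem_progSet hx
  obtain ⟨j, hj, hyj⟩ := exists_add_eq_of_mem_progSet hy
  have hij : i < j := by
    by_contra! hji
    have := Nat.mul_le_mul_right s hji
    omega
  refine ⟨j - i, mem_Icc.mpr ⟨by omega, by omega⟩, ?_⟩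
  have : j * s = i * s + (j - i) * s := by rw [← Nat.add_mul, Nat.add_sub_cancel' hij.le]
  omega

lemma card_progSet_le (r a s : ℕ) : #(progSet r a s) ≤ r + 1 := by
  refine (card_union_le _ _).trans (add_le_add (card_image_le.trans_eq (card_range r)) ?_)
  split_ifs <;> simp

lemma card_filter_two_le_card_inter_progSet_le (S : Finset (ℕ × ℕ)) (r a s : ℕ) :
    #{p ∈ S | 2 ≤ #(progSet r a s ∩ progSet r p.1 p.2)} ≤ r ^ 2 * (r + 1) ^ 2 := by
  -- `u` is the smaller common point, `k₁ s = k₂ t` and `u + t = b + j t`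
  let partner : ℕ × ℕ × ℕ × ℕ → ℕ × ℕ := fun ⟨u, k₁, k₂, j⟩ =>
    (u + k₁ * s / k₂ - j * (k₁ * s / k₂), k₁ * s / k₂)
  calc #{p ∈ S | 2 ≤ #(progSet r a s ∩ progSet r p.1 p.2)}
      ≤ #(progSet r a s ×ˢ Icc 1 r ×ˢ Icc 1 r ×ˢ range (r + 1)) := by
        refine card_le_card_of_surjOn partner ?_
        rintro ⟨b, t⟩ hbt
        replace hbt := (mem_filter.mp (mem_coe.mp hbt)).2
        set I := progSet r a s ∩ progSet r b t
        have hI : I.Nonempty := card_pos.mp (by omega)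
        have hu := mem_inter.mp (I.min'_mem hI)
        have hv := mem_inter.mp (I.max'_mem hI)
        have huv := I.min'_lt_max'_of_card (by omega)
        obtain ⟨k₁, hk₁, hvs⟩ := exists_eq_add_mul_of_mem_progSet hu.1 hv.1 huv
        obtain ⟨k₂, hk₂, hvt⟩ := exists_eq_add_mul_of_mem_progSet hu.2 hv.2 huv
        obtain ⟨j, hj, hb⟩ := exists_add_eq_of_mem_progSet hu.2
        have ht : k₁ * s / k₂ = t := by
          rw [show k₁ * s = k₂ * t by omega, Nat.mul_div_cancel_left t (by simp at hk₂; omega)]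
        refine ⟨(I.min' hI, k₁, k₂, j), ?_, ?_⟩
        · simp only [coe_product, Set.mem_prod, mem_coe, mem_range]
          exact ⟨hu.1, hk₁, hk₂, by omega⟩
        · simp only [partner, ht, Prod.mk.injEq, and_true]
          omega
    _ ≤ r ^ 2 * (r + 1) ^ 2 := by
        simp only [card_product, Nat.card_Icc, Nat.add_sub_cancel, card_range]
        exact (Nat.mul_le_mul_right _ (card_progSet_le r a s)).trans_eq (by ring)

lemma two_mul_card_filter_add_le (n : ℕ) :
    2 * #{p ∈ Icc 1 n ×ˢ Icc 1 n | p.1 + p.2 ≤ n} ≤ n ^ 2 := by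
  set T := {p ∈ Icc 1 n ×ˢ Icc 1 n | p.1 + p.2 ≤ n}
  let reflect : ℕ × ℕ → ℕ × ℕ := fun p => (n + 1 - p.1, n + 1 - p.2)
  have hT : ∀ p ∈ T, (1 ≤ p.1 ∧ p.1 ≤ n) ∧ (1 ≤ p.2 ∧ p.2 ≤ n) ∧ p.1 + p.2 ≤ n := by
    intro p hp
    simpa only [T, mem_filter, mem_product, mem_Icc, and_assoc] using hp
  have hinj : Set.InjOn reflect T := by
    intro p hp q hq h
    have := hT p hp
    have := hT q hq
    simp only [reflect, Prod.mk.injEq] at h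
    exact Prod.ext (by omega) (by omega)
  have hdisj : Disjoint T (T.image reflect) := by
    refine disjoint_left.mpr fun p hp hp' => ?_
    obtain ⟨q, hq, rfl⟩ := mem_image.mp hp'
    have := hT q hq
    have := hT _ hp
    simp only [reflect] at this
    omega
  calc 2 * #T = #(T ∪ T.image reflect) := by
        rw [card_union_of_disjoint hdisj, card_image_of_injOn hinj, two_mul]
    _ ≤ #(Icc 1 n ×ˢ Icc 1 n) := by
        refine card_le_card (union_subset (filter_subset _ _) fun p hp => ?_)
        obtain ⟨q, hq, rfl⟩ := mem_image.mp hp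
        have := hT q hq
        simp only [reflect, mem_product, mem_Icc]
        omega
    _ = n ^ 2 := by simp [sq]

lemma card_Bn_mul_le (n r : ℕ) :
    #(Bn n r) * (r - 1) ≤ #{p ∈ Icc 1 n ×ˢ Icc 1 n | p.1 + p.2 ≤ n} := by
  set m := r - 1
  have hBn : ∀ a s, (a, s) ∈ Bn n r → (1 ≤ a ∧ a ≤ n) ∧ (1 ≤ s ∧ s ≤ n) ∧ a + m * s ≤ n := by
    intro a s hq
    simpa only [Bn, mem_filter, mem_product, mem_Icc, and_assoc] using hq
  rw [← card_range m, ← card_product]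
  -- `(a, s)` owns the `m` values `m * (s - 1) < c ≤ m * s`, all with `a + c ≤ n`
  refine card_le_card_of_injOn (fun x => (x.1.1, m * (x.1.2 - 1) + x.2 + 1)) ?_ ?_
  · rintro ⟨⟨a, s⟩, j⟩ hx
    obtain ⟨hq, hj⟩ := mem_product.mp hx
    obtain ⟨ha, hs, hsum⟩ := hBn a s hq
    have hms : m * s = m * (s - 1) + m := by
      rw [← Nat.mul_add_one, Nat.sub_add_cancel hs.1]
    simp only [mem_range] at hj
    simp only [coe_filter, mem_product, mem_Icc, Set.mem_ofPred_eq]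
    omega
  · rintro ⟨⟨a, s⟩, j⟩ hx ⟨⟨a', s'⟩, j'⟩ hx' h
    obtain ⟨hq, hj⟩ := mem_product.mp hx
    obtain ⟨hq', hj'⟩ := mem_product.mp hx'
    simp only [mem_range] at hj hj'
    simp only [Prod.mk.injEq] at h
    have hm : 0 < m := by omega
    have hs : s - 1 = s' - 1 := by
      have := congrArg (· / m) (show m * (s - 1) + j = m * (s' - 1) + j' by omega)
      simpa only [Nat.mul_add_div hm, Nat.div_eq_of_lt hj, Nat.div_eq_of_lt hj', Nat.add_zero]
        using this
    have := (hBn a s hq).2.1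
    have := (hBn a' s' hq').2.1
    simp only [Prod.mk.injEq]
    refine ⟨⟨h.1, by omega⟩, ?_⟩
    rw [hs] at h
    omega

lemma card_filter_two_le_card_inter_progSet_product_le (S : Finset (ℕ × ℕ)) (r : ℕ) :
    #{q ∈ S ×ˢ S | 2 ≤ #(progSet r q.1.1 q.1.2 ∩ progSet r q.2.1 q.2.2)}
      ≤ #S * (r ^ 2 * (r + 1) ^ 2) := by
  rw [card_filter, sum_product]
  simp_rw [← card_filter]
  exact sum_le_card_nsmul _ _ _ fun q _ => card_filter_two_le_card_inter_progSet_le S r q.1 q.2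

theorem stmt9_general (n r : ℕ) (hr : 2 ≤ r) :
    ((((Bn n r ×ˢ Bn n r).filter fun q : (ℕ × ℕ) × ℕ × ℕ =>
        2 ≤ (progSet r q.1.1 q.1.2 ∩ progSet r q.2.1 q.2.2).card).card : ℝ))
      ≤ 9 * (n : ℝ) ^ 2 * (r : ℝ) ^ 3 / 4 := by
  have hF := card_filter_two_le_card_inter_progSet_product_le (Bn n r) r
  have hB := card_Bn_mul_le n r
  have hT := two_mul_card_filter_add_le n
  obtain ⟨m, rfl⟩ : ∃ m, r = m + 2 := ⟨r - 2, by omega⟩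
  rw [show m + 2 - 1 = m + 1 by omega] at hB
  set F := #{q ∈ Bn n (m + 2) ×ˢ Bn n (m + 2) |
    2 ≤ #(progSet (m + 2) q.1.1 q.1.2 ∩ progSet (m + 2) q.2.1 q.2.2)}
  have key : 4 * F * (m + 1) ≤ 9 * n ^ 2 * (m + 2) ^ 3 * (m + 1) := calc
    4 * F * (m + 1) ≤ 4 * (#(Bn n (m + 2)) * ((m + 2) ^ 2 * (m + 3) ^ 2)) * (m + 1) := by
        gcongr
    _ = 2 * (m + 2) ^ 2 * (m + 3) ^ 2 * (2 * (#(Bn n (m + 2)) * (m + 1))) := by ring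
    _ ≤ 2 * (m + 2) ^ 2 * (m + 3) ^ 2 * n ^ 2 := by gcongr; omega
    _ = (m + 2) ^ 2 * n ^ 2 * (2 * (m + 3) ^ 2) := by ring
    _ ≤ (m + 2) ^ 2 * n ^ 2 * (9 * (m + 2) * (m + 1)) :=
        Nat.mul_le_mul_left _ (by nlinarith)
    _ = 9 * n ^ 2 * (m + 2) ^ 3 * (m + 1) := by ring
  rw [le_div_iff₀ four_pos]
  exact_mod_cast (Nat.le_of_mul_le_mul_right key m.succ_pos).trans_eq' (mul_comm _ _)

/-- The number of quadruples `(a,s,b,t) ∈ B_n × B_n` with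
`|B_{a,s} ∩ B_{b,t}| ≥ 2` is at most `9n²r³/4`. -/
theorem stmt9 (n r : ℕ) (hr : 2 ≤ r) (hrn : r ≤ n) :
    ((((Bn n r ×ˢ Bn n r).filter fun q : (ℕ × ℕ) × ℕ × ℕ =>
        2 ≤ (progSet r q.1.1 q.1.2 ∩ progSet r q.2.1 q.2.2).card).card : ℝ))
      ≤ 9 * (n : ℝ) ^ 2 * (r : ℝ) ^ 3 / 4 :=
  stmt9_general n r hr
end

section
/- Let ξ_1,…,ξ_n be Bernoulli random variables and 2 ≤ r ≤ n. For (a,s) ∈ B̃_n define Ã_{a,s} = {ξ_a = 0, ξ_{a+s mod n} = 1, …, ξ_{a+rs mod n} = 1}. If a ≠ b and the sets B̃_{a,s} = {a, a+s mod n, …, a+rs mod n} and B̃_{b,s} intersect, then Ã_{a,s} ∩ Ã_{b,s} = ∅. -/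
/-- Residue of `x` mod `n` taken in `{1,…,n}`. -/
def amod (x n : ℕ) : ℕ := if x % n = 0 then n else x % n

/-- `B̃_{a,s} = {a, a+s mod n, …, a+rs mod n}`. -/
def progModSet (n r a s : ℕ) : Finset ℕ :=
  (Finset.range (r + 1)).image fun j => amod (a + j * s) n

lemma amod_eq_self {x n : ℕ} (h1 : 1 ≤ x) (h2 : x ≤ n) : amod x n = x := by
  unfold amod
  rcases eq_or_lt_of_le h2 with rfl | h
  · simp
  · rw [Nat.mod_eq_of_lt h, if_neg (by omega)]

lemma amod_mod_eq {x y n : ℕ} (h : amod x n = amod y n) (hn : 0 < n) :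
    x % n = y % n := by
  have hx := Nat.mod_lt x hn
  have hy := Nat.mod_lt y hn
  unfold amod at h
  split_ifs at h with h1 h2 h2 <;> omega

lemma key (n r a b s : ℕ) (hn : 0 < n) (ha : 1 ≤ a ∧ a ≤ n) (hb : 1 ≤ b ∧ b ≤ n)
    (hab : a ≠ b) (i j : ℕ) (hj : j ≤ r) (hij : i ≤ j)
    (h : (a + i * s) % n = (b + j * s) % n) :
    ∃ k, 1 ≤ k ∧ k ≤ r ∧ amod (b + k * s) n = a := by
  set k := j - i with hk
  have hj' : j = k + i := by omega
  have : (a + i * s) % n = (b + k * s + i * s) % n := by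
    rw [h]; ring_nf; rw [hj']; ring_nf
  have hmod : a % n = (b + k * s) % n :=
    Nat.ModEq.add_right_cancel' (i * s) this
  have hk1 : 1 ≤ k := by
    by_contra hk0
    have hk0' : k = 0 := by omega
    rw [hk0'] at hmod
    simp at hmod
    have h1 : amod a n = amod b n := by unfold amod; rw [hmod]
    rw [amod_eq_self ha.1 ha.2, amod_eq_self hb.1 hb.2] at h1
    exact hab h1
  refine ⟨k, hk1, by omega, ?_⟩
  have : amod (b + k * s) n = amod a n := by unfold amod; rw [hmod]
  rw [this, amod_eq_self ha.1 ha.2]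

/-- If `a ≠ b`, both `(a,s),(b,s) ∈ B̃_n`, and `B̃_{a,s} ∩ B̃_{b,s} ≠ ∅`, then
the events `Ã_{a,s}` and `Ã_{b,s}` are disjoint. -/
theorem stmt15 {Ω : Type*} (ξ : ℕ → Ω → Bool) (n r : ℕ) (hr : 2 ≤ r) (hrn : r ≤ n)
    (a b s : ℕ) (ha : 1 ≤ a ∧ a ≤ n) (hb : 1 ≤ b ∧ b ≤ n) (hab : a ≠ b)
    (hs : 1 ≤ s ∧ 2 * s ≤ n) (hgcd : Nat.gcd n s * r < n)
    (hint : (progModSet n r a s ∩ progModSet n r b s).Nonempty) :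
    {ω | ξ a ω = false ∧ ∀ j : ℕ, 1 ≤ j → j ≤ r → ξ (amod (a + j * s) n) ω = true} ∩
      {ω | ξ b ω = false ∧ ∀ j : ℕ, 1 ≤ j → j ≤ r → ξ (amod (b + j * s) n) ω = true}
      = ∅ := by
  have hn : 0 < n := by omega
  obtain ⟨x, hx⟩ := hint
  rw [Finset.mem_inter] at hx
  obtain ⟨hx1, hx2⟩ := hx
  simp only [progModSet, Finset.mem_image, Finset.mem_range] at hx1 hx2
  obtain ⟨i, hi, hxa⟩ := hx1
  obtain ⟨j, hj, hxb⟩ := hx2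
  have hij : (a + i * s) % n = (b + j * s) % n :=
    amod_mod_eq (by rw [hxa, hxb]) hn
  ext ω
  simp only [Set.mem_inter_iff, Set.mem_setOf_eq, Set.mem_empty_iff_false, iff_false,
    not_and, and_imp]
  intro hfa hta hfb htb
  rcases le_or_gt i j with hle | hlt
  · obtain ⟨k, hk1, hk2, hk3⟩ := key n r a b s hn ha hb hab i j (by omega) hle hij
    have := htb k hk1 hk2
    rw [hk3, hfa] at this
    exact Bool.false_ne_true this
  · obtain ⟨k, hk1, hk2, hk3⟩ := key n r b a s hn hb ha (Ne.symm hab) j i (by omega)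
      (by omega) hij.symm
    have := hta k hk1 hk2
    rw [hk3, hfb] at this
    exact Bool.false_ne_true this
end
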